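/- Completeness of the majorization lattice (supremum): For any nonempty subset Q of the probability simplex in ℝ^n, there exists a probability vector v such that q ≺ v for every q ∈ Q, and for any probability vector y with q ≺ y for all q ∈ Q, one has v ≺ y. -/

import Mathlib

/-!
The supremum of `Q` is the infimum of its set of upper bounds, and infima exist for any
nonempty set `U` of probability vectors: the profile `g k = inf_{y ∈ U} pMax y k` is an
infimum of increasing concave profiles `k ↦ pMax y k`, hence itself increasing and concave,
with `g 0 = 0` and `g n = 1`. Its increments `v i = g (i + 1) - g i` therefore form a
decreasing probability vector, whose partial-sum profile is exactly `g`.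
-/

open Finset

noncomputable def pMax {n : ℕ} (x : Fin n → ℝ) (k : ℕ) : ℝ :=
  sSup {s : ℝ | ∃ I : Finset (Fin n), I.card = k ∧ s = ∑ i ∈ I, x i}

def Maj {n : ℕ} (x y : Fin n → ℝ) : Prop :=
  (∀ k ≤ n, pMax x k ≤ pMax y k) ∧ (∑ i, x i = ∑ i, y i)

def ProbVec {n : ℕ} (p : Fin n → ℝ) : Prop :=
  (∀ i, 0 ≤ p i) ∧ ∑ i, p i = 1

variable {n : ℕ}

lemma sum_le_sum_range_card_of_antitoneOn {M : Type*} [AddCommMonoid M] [PartialOrder M]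
    [IsOrderedAddMonoid M] {d : ℕ → M} (hd : AntitoneOn d (Set.Iio n)) {J : Finset ℕ}
    (hJ : J ⊆ range n) : ∑ i ∈ J, d i ≤ ∑ i ∈ range #J, d i := by
  induction J using Finset.induction_on_max with
  | empty => simp
  | insert a J hlt ih =>
    have haJ : a ∉ J := fun h => (hlt a h).false
    have hJa : J ⊆ range a := fun x hx => mem_range.2 (hlt x hx)
    have ha : a < n := mem_range.1 (hJ (mem_insert_self a J))
    have hcard : #J ≤ a := by simpa using card_le_card hJa
    rw [sum_insert haJ, card_insert_of_notMem haJ, sum_range_succ, add_comm]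
    exact add_le_add (ih ((subset_insert a J).trans hJ))
      (hd (show #J < n by omega) ha hcard)

section pMax

variable (x : Fin n → ℝ) {k : ℕ}

lemma pMax_set_finite :
    {s : ℝ | ∃ I : Finset (Fin n), #I = k ∧ s = ∑ i ∈ I, x i}.Finite :=
  (Set.finite_range fun I : Finset (Fin n) => ∑ i ∈ I, x i).subset
    fun _ ⟨I, _, hs⟩ => ⟨I, hs.symm⟩

lemma sum_le_pMax (I : Finset (Fin n)) : ∑ i ∈ I, x i ≤ pMax x #I :=
  le_csSup (pMax_set_finite x).bddAbove ⟨I, rfl, rfl⟩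

lemma exists_card_eq_pMax_eq (hk : k ≤ n) :
    ∃ I : Finset (Fin n), #I = k ∧ pMax x k = ∑ i ∈ I, x i := by
  obtain ⟨I, -, hI⟩ := exists_subset_card_eq (s := (univ : Finset (Fin n))) (by simpa using hk)
  have hne : {s : ℝ | ∃ I : Finset (Fin n), #I = k ∧ s = ∑ i ∈ I, x i}.Nonempty := ⟨_, I, hI, rfl⟩
  exact hne.csSup_mem (pMax_set_finite x)

lemma pMax_zero : pMax x 0 = 0 := by
  obtain ⟨I, hI, h⟩ := exists_card_eq_pMax_eq x (Nat.zero_le n)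
  rw [h, card_eq_zero.1 hI, sum_empty]

lemma pMax_eq_sum_univ : pMax x n = ∑ i, x i := by
  obtain ⟨I, hI, h⟩ := exists_card_eq_pMax_eq x le_rfl
  rwa [eq_univ_of_card I (by simpa using hI)] at h

lemma pMax_nonneg (hx : ∀ i, 0 ≤ x i) : 0 ≤ pMax x k :=
  Real.sSup_nonneg fun _ ⟨_, _, hs⟩ => hs ▸ sum_nonneg fun i _ => hx i

lemma pMax_le_sum_univ (hx : ∀ i, 0 ≤ x i) (hk : k ≤ n) : pMax x k ≤ ∑ i, x i := by
  obtain ⟨I, -, h⟩ := exists_card_eq_pMax_eq x hk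
  exact h ▸ sum_le_sum_of_subset_of_nonneg (subset_univ I) fun i _ _ => hx i

lemma pMax_le_pMax_add_one (hx : ∀ i, 0 ≤ x i) (hk : k < n) : pMax x k ≤ pMax x (k + 1) := by
  obtain ⟨I, hI, h⟩ := exists_card_eq_pMax_eq x hk.le
  obtain ⟨i, hi⟩ : ∃ i, i ∉ I := by
    by_contra! hall
    have := card_le_card fun i (_ : i ∈ univ) => hall i
    simp only [card_univ, Fintype.card_fin] at this
    omega
  calc pMax x k = ∑ j ∈ I, x j := h
    _ ≤ ∑ j ∈ insert i I, x j := by rw [sum_insert hi]; linarith [hx i]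
    _ ≤ pMax x (k + 1) := by
      simpa [card_insert_of_notMem hi, hI] using sum_le_pMax x (insert i I)

/-- Exchange argument: move an element from an optimal `(k + 2)`-set to an optimal `k`-set. -/
lemma pMax_add_pMax_add_two_le (hk : k + 2 ≤ n) :
    pMax x k + pMax x (k + 2) ≤ 2 * pMax x (k + 1) := by
  obtain ⟨I, hI, hIs⟩ := exists_card_eq_pMax_eq x hk
  obtain ⟨J, hJ, hJs⟩ := exists_card_eq_pMax_eq x (k := k) (by omega)
  obtain ⟨i, hiI, hiJ⟩ : ∃ i ∈ I, i ∉ J := by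
    by_contra! hIJ
    have := card_le_card hIJ
    omega
  have hJi := sum_le_pMax x (insert i J)
  have hIi := sum_le_pMax x (I.erase i)
  rw [card_insert_of_notMem hiJ, hJ, sum_insert hiJ] at hJi
  rw [card_erase_of_mem hiI, hI, show k + 2 - 1 = k + 1 by omega, sum_erase_eq_sub hiI] at hIi
  rw [hIs, hJs]
  linarith

lemma pMax_eq_sum_range_of_antitoneOn {d : ℕ → ℝ} (hd : AntitoneOn d (Set.Iio n))
    (hk : k ≤ n) : pMax (fun i : Fin n => d i) k = ∑ i ∈ range k, d i := by
  apply le_antisymm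
  · obtain ⟨I, hI, h⟩ := exists_card_eq_pMax_eq (fun i : Fin n => d i) hk
    have hval : #(I.image Fin.val) = k := by rw [card_image_of_injective _ Fin.val_injective, hI]
    rw [h, ← sum_image fun i _ j _ => Fin.val_injective.eq_iff.1, ← hval]
    exact sum_le_sum_range_card_of_antitoneOn hd fun i hi => by
      obtain ⟨j, -, rfl⟩ := mem_image.1 hi
      exact mem_range.2 j.2
  · have hrange : ∀ m ∈ range k, m < n := fun m hm => (mem_range.1 hm).trans_le hk
    have := sum_le_pMax (fun i : Fin n => d i) ((range k).attachFin hrange)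
    rwa [card_attachFin, card_range, ← sum_image fun i _ j _ => Fin.val_injective.eq_iff.1,
      image_val_attachFin] at this

end pMax

lemma pMax_sub_eq_sub_of_concave {g : ℕ → ℝ}
    (hg : ∀ k, k + 2 ≤ n → g k + g (k + 2) ≤ 2 * g (k + 1)) {k : ℕ} (hk : k ≤ n) :
    pMax (fun i : Fin n => g (i + 1) - g i) k = g k - g 0 := by
  have hd : AntitoneOn (fun i => g (i + 1) - g i) (Set.Iio n) :=
    antitoneOn_of_add_one_le Set.ordConnected_Iio fun a _ _ ha => by
      have := hg a (by simp at ha; omega)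
      linarith
  rw [pMax_eq_sum_range_of_antitoneOn hd hk, sum_range_sub]

lemma maj_single_one (i : Fin n) {q : Fin n → ℝ} (hq : ProbVec q) : Maj q (Pi.single i 1) := by
  refine ⟨fun k hk => ?_, by simp [hq.2]⟩
  rcases Nat.eq_zero_or_pos k with rfl | hk0
  · simp [pMax_zero]
  obtain ⟨I, hiI, -, hI⟩ :=
    exists_subsuperset_card_eq (n := k) (singleton_subset_iff.2 (mem_univ i))
    (by rw [card_singleton]; exact hk0) (by simpa using hk)
  calc pMax q k ≤ 1 := hq.2 ▸ pMax_le_sum_univ q hq.1 hk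
    _ = ∑ j ∈ I, Pi.single i (1 : ℝ) j := by simp [sum_pi_single', hiI (mem_singleton_self i)]
    _ ≤ pMax (Pi.single i 1) k := hI ▸ sum_le_pMax _ I

lemma probVec_single (i : Fin n) : ProbVec (Pi.single i (1 : ℝ)) :=
  ⟨fun j => by by_cases h : j = i <;> simp [h], by simp⟩

noncomputable def infPMax (U : Set (Fin n → ℝ)) (k : ℕ) : ℝ :=
  sInf ((pMax · k) '' U)

section infPMax

variable {U : Set (Fin n → ℝ)} {k : ℕ}

lemma infPMax_le (hU : ∀ y ∈ U, ∀ i, 0 ≤ y i) {y : Fin n → ℝ} (hy : y ∈ U) :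
    infPMax U k ≤ pMax y k :=
  csInf_le ⟨0, Set.forall_mem_image.2 fun y hy => pMax_nonneg y (hU y hy)⟩ ⟨y, hy, rfl⟩

lemma le_infPMax (hUne : U.Nonempty) {c : ℝ} (h : ∀ y ∈ U, c ≤ pMax y k) : c ≤ infPMax U k :=
  le_csInf (hUne.image _) (Set.forall_mem_image.2 h)

lemma infPMax_zero (hUne : U.Nonempty) : infPMax U 0 = 0 := by
  simp [infPMax, pMax_zero, hUne.image_const]

lemma infPMax_eq_one (hUne : U.Nonempty) (hU : ∀ y ∈ U, ProbVec y) : infPMax U n = 1 := by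
  obtain ⟨y, hy⟩ := hUne
  refine le_antisymm ?_ (le_infPMax ⟨y, hy⟩ fun z hz => ?_)
  · simpa [pMax_eq_sum_univ, (hU y hy).2] using infPMax_le (k := n) (fun z hz => (hU z hz).1) hy
  · rw [pMax_eq_sum_univ, (hU z hz).2]

lemma infPMax_le_infPMax_add_one (hUne : U.Nonempty) (hU : ∀ y ∈ U, ∀ i, 0 ≤ y i)
    (hk : k < n) : infPMax U k ≤ infPMax U (k + 1) :=
  le_infPMax hUne fun y hy => (infPMax_le hU hy).trans (pMax_le_pMax_add_one y (hU y hy) hk)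

lemma infPMax_add_infPMax_add_two_le (hUne : U.Nonempty) (hU : ∀ y ∈ U, ∀ i, 0 ≤ y i)
    (hk : k + 2 ≤ n) : infPMax U k + infPMax U (k + 2) ≤ 2 * infPMax U (k + 1) := by
  suffices (infPMax U k + infPMax U (k + 2)) / 2 ≤ infPMax U (k + 1) by linarith
  refine le_infPMax hUne fun y hy => ?_
  linarith [infPMax_le (k := k) hU hy, infPMax_le (k := k + 2) hU hy,
    pMax_add_pMax_add_two_le y hk]

end infPMax

theorem exists_probVec_maj_glb {U : Set (Fin n → ℝ)} (hUne : U.Nonempty)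
    (hU : ∀ y ∈ U, ProbVec y) :
    ∃ v, ProbVec v ∧ (∀ y ∈ U, Maj v y) ∧ ∀ x, (∀ y ∈ U, Maj x y) → Maj x v := by
  have hU0 : ∀ y ∈ U, ∀ i, 0 ≤ y i := fun y hy => (hU y hy).1
  set v : Fin n → ℝ := fun i => infPMax U (i + 1) - infPMax U i
  have hpv : ∀ k ≤ n, pMax v k = infPMax U k := fun k hk => by
    rw [pMax_sub_eq_sub_of_concave (g := infPMax U)
      (fun k hk => infPMax_add_infPMax_add_two_le hUne hU0 hk) hk, infPMax_zero hUne, sub_zero]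
  have hsum : ∑ i, v i = 1 := by
    rw [← pMax_eq_sum_univ, hpv n le_rfl, infPMax_eq_one hUne hU]
  have hv : ProbVec v :=
    ⟨fun i => sub_nonneg.2 (infPMax_le_infPMax_add_one hUne hU0 i.2), hsum⟩
  obtain ⟨y₀, hy₀⟩ := hUne
  refine ⟨v, hv, fun y hy => ⟨fun k hk => ?_, ?_⟩, fun x hx => ⟨fun k hk => ?_, ?_⟩⟩
  · exact hpv k hk ▸ infPMax_le hU0 hy
  · rw [hsum, (hU y hy).2]
  · exact hpv k hk ▸ le_infPMax ⟨y₀, hy₀⟩ fun y hy => (hx y hy).1 k hk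
  · rw [hsum, (hx y₀ hy₀).2, (hU y₀ hy₀).2]

/-- completeness of the majorization lattice (supremum).  Any nonempty
set `Q` of probability vectors has a least upper bound `v` under majorization:
`q ≺ v` for all `q ∈ Q`, and any probability vector `y` with `q ≺ y` for all `q ∈ Q`
satisfies `v ≺ y`. -/
theorem majorization_lattice_supremum {n : ℕ} (Q : Set (Fin n → ℝ)) (hQne : Q.Nonempty)
    (hQ : ∀ q ∈ Q, ProbVec q) :
    ∃ v : Fin n → ℝ, ProbVec v ∧ (∀ q ∈ Q, Maj q v) ∧
      (∀ y : Fin n → ℝ, ProbVec y → (∀ q ∈ Q, Maj q y) → Maj v y) := by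
  obtain ⟨q₀, hq₀⟩ := hQne
  have hn : 0 < n := Nat.pos_of_ne_zero fun hn => by subst hn; simpa using (hQ q₀ hq₀).2
  obtain ⟨v, hv, hv_le, hv_glb⟩ := exists_probVec_maj_glb
    (U := {y | ProbVec y ∧ ∀ q ∈ Q, Maj q y})
    ⟨_, probVec_single ⟨0, hn⟩, fun q hq => maj_single_one _ (hQ q hq)⟩ fun y hy => hy.1
  exact ⟨v, hv, fun q hq => hv_glb q fun y hy => hy.2 q hq, fun y hy hQy => hv_le y ⟨hy, hQy⟩⟩
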